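/- Let T_1, ..., T_M be operators on ℝ^d, each α-averaged for some α ∈ (0,1], let λ ∈ (0, 1/α), let H ≥ 1 be an integer, and set 𝒯̃_λ = (1/M) Σ_{i=1}^M (λT_i + (1−λ)Id)^H and ζ = Hαλ / (1 + (H−1)αλ). Let x† be a fixed point of 𝒯̃_λ and let (y_n) be defined by y_{n+1} = 𝒯̃_λ(y_n) from an arbitrary y_0 ∈ ℝ^d. Then for every n ∈ ℕ, ‖y_{n+1} − y_n‖² ≤ ‖y_0 − x†‖² / (ζ(1−ζ)(n+1)). -/

import Mathlib

/-!
Write `β = αλ`. Each relaxed map `λTᵢ + (1 - λ)Id` equals `βTᵢ' + (1 - β)Id`, hence is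
`β`-averaged, i.e. satisfies `‖f x - f y‖² + s ‖(Id - f) x - (Id - f) y‖² ≤ ‖x - y‖²` with
`s = (1 - β)/β`. Composing two such maps with constants `s, t` gives constant `st/(s + t)`,
so the `H`-fold power has constant `s/H = (1 - ζ)/ζ`; convex combinations keep the constant,
being affine in the nonexpansive map `(1 + s)f - s Id`. For the iterates of such an `S` with a
fixed point `x†`, the inequality at `(yₖ, x†)` telescopes to
`s ∑ₖ ‖yₖ₊₁ - yₖ‖² ≤ ‖y₀ - x†‖²`, and the differences `‖yₖ₊₁ - yₖ‖` decrease since `S` is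
nonexpansive. Finally `ζ(1 - ζ) ≤ (1 - ζ)/ζ`.
-/

section Normed

variable {E : Type*} [NormedAddCommGroup E]

/-- For `s = (1 - β) / β` this is the quadratic characterization of `β`-averaged maps
(`averagedIneq_iff_nonexpansive`); it is the form in which composition is tractable. -/
def AveragedIneq (s : ℝ) (f : E → E) : Prop :=
  ∀ x y : E, ‖f x - f y‖ ^ 2 + s * ‖(x - f x) - (y - f y)‖ ^ 2 ≤ ‖x - y‖ ^ 2

namespace AveragedIneq

variable {s : ℝ} {f : E → E}

theorem sq_norm_sub_le (hs : 0 ≤ s) (hf : AveragedIneq s f) (x y : E) :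
    ‖f x - f y‖ ^ 2 ≤ ‖x - y‖ ^ 2 :=
  (le_add_of_nonneg_right (by positivity)).trans (hf x y)

theorem sq_norm_sub_fixedPoint_add_le (hf : AveragedIneq s f) {x₀ : E} (hx₀ : f x₀ = x₀)
    (x : E) : ‖f x - x₀‖ ^ 2 + s * ‖f x - x‖ ^ 2 ≤ ‖x - x₀‖ ^ 2 := by
  simpa only [hx₀, sub_self, sub_zero, norm_sub_rev x (f x)] using hf x x₀

theorem mul_sq_norm_succ_sub_le (hs : 0 ≤ s) (hf : AveragedIneq s f) {x₀ : E}
    (hx₀ : f x₀ = x₀) {y : ℕ → E} (hy : ∀ n, y (n + 1) = f (y n)) (n : ℕ) :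
    s * (n + 1) * ‖y (n + 1) - y n‖ ^ 2 ≤ ‖y 0 - x₀‖ ^ 2 := by
  have hdecr : ∀ k, ‖y (k + 1) - x₀‖ ^ 2 + s * ‖y (k + 1) - y k‖ ^ 2 ≤ ‖y k - x₀‖ ^ 2 :=
    fun k => hy k ▸ hf.sq_norm_sub_fixedPoint_add_le hx₀ (y k)
  have hstep : ∀ k, ‖y (k + 2) - y (k + 1)‖ ^ 2 ≤ ‖y (k + 1) - y k‖ ^ 2 := fun k => by
    simpa only [hy] using hf.sq_norm_sub_le hs (y (k + 1)) (y k)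
  suffices h : ∀ n : ℕ, s * (n + 1) * ‖y (n + 1) - y n‖ ^ 2 + ‖y (n + 1) - x₀‖ ^ 2
      ≤ ‖y 0 - x₀‖ ^ 2 from (le_add_of_nonneg_right (sq_nonneg _)).trans (h n)
  intro n
  induction n with
  | zero => simpa [add_comm] using hdecr 0
  | succ k ih =>
    have := mul_le_mul_of_nonneg_left (hstep k) (by positivity : 0 ≤ s * (k + 1))
    push_cast
    linarith [hdecr (k + 1)]

end AveragedIneq

end Normed

section InnerProduct

variable {E : Type*} [NormedAddCommGroup E] [InnerProductSpace ℝ E]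

theorem norm_smul_sub_smul_sq_sub_norm_sq (s : ℝ) (u v : E) :
    ‖(1 + s) • u - s • v‖ ^ 2 - ‖v‖ ^ 2
      = (1 + s) * (‖u‖ ^ 2 + s * ‖v - u‖ ^ 2 - ‖v‖ ^ 2) := by
  rw [norm_sub_sq_real, norm_sub_sq_real, norm_smul, norm_smul, mul_pow, mul_pow,
    Real.norm_eq_abs, Real.norm_eq_abs, sq_abs, sq_abs, real_inner_smul_left,
    real_inner_smul_right, real_inner_comm]
  ring

theorem averagedIneq_iff_nonexpansive {s : ℝ} (hs : 0 < 1 + s) {f : E → E} :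
    AveragedIneq s f ↔ ∀ x y, ‖(1 + s) • (f x - f y) - s • (x - y)‖ ≤ ‖x - y‖ := by
  refine forall₂_congr fun x y => ?_
  rw [sub_sub_sub_comm, ← sq_le_sq₀ (norm_nonneg _) (norm_nonneg _), ← sub_nonpos,
    ← sub_nonpos (a := ‖_ - _‖ ^ 2), norm_smul_sub_smul_sq_sub_norm_sq,
    ← mul_le_mul_iff_of_pos_left hs, mul_zero]

theorem averagedIneq_of_eq_smul_add {β : ℝ} (hβ : 0 < β) {f g : E → E}
    (hg : ∀ x y, ‖g x - g y‖ ≤ ‖x - y‖) (hf : ∀ x, f x = β • g x + (1 - β) • x) :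
    AveragedIneq ((1 - β) / β) f := by
  have hβ' : 1 + (1 - β) / β = β⁻¹ := by field_simp; ring
  rw [averagedIneq_iff_nonexpansive (by rw [hβ']; positivity)]
  intro x y
  convert hg x y using 2
  rw [hf, hf, hβ']
  match_scalars <;> field_simp <;> ring

theorem mul_mul_norm_add_sq_le (p q : ℝ) (a b : E) :
    p * q * ‖a + b‖ ^ 2 ≤ (p + q) * (q * ‖a‖ ^ 2 + p * ‖b‖ ^ 2) := by
  have h : (p + q) * (q * ‖a‖ ^ 2 + p * ‖b‖ ^ 2) - p * q * ‖a + b‖ ^ 2 = ‖q • a - p • b‖ ^ 2 := by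
    rw [norm_add_sq_real, norm_sub_sq_real, norm_smul, norm_smul, mul_pow, mul_pow,
      Real.norm_eq_abs, Real.norm_eq_abs, sq_abs, sq_abs, real_inner_smul_left,
      real_inner_smul_right]
    ring
  nlinarith [sq_nonneg ‖q • a - p • b‖]

namespace AveragedIneq

variable {s : ℝ} {f : E → E}

theorem comp {t : ℝ} {g : E → E} (hs : 0 < s) (ht : 0 < t) (hf : AveragedIneq s f)
    (hg : AveragedIneq t g) : AveragedIneq (s * t / (s + t)) (f ∘ g) := by
  intro x y
  set a := (x - g x) - (y - g y)
  set b := (g x - f (g x)) - (g y - f (g y))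
  have hsplit : (x - f (g x)) - (y - f (g y)) = a + b := by simp only [a, b]; abel
  have hab : s * t / (s + t) * ‖a + b‖ ^ 2 ≤ t * ‖a‖ ^ 2 + s * ‖b‖ ^ 2 := by
    rw [div_mul_eq_mul_div, div_le_iff₀ (by positivity), mul_comm _ (s + t)]
    exact mul_mul_norm_add_sq_le s t a b
  simp only [Function.comp_apply, hsplit]
  linarith [hf (g x) (g y), hg x y]

theorem iterate (hs : 0 < s) (hf : AveragedIneq s f) {n : ℕ} (hn : 0 < n) :
    AveragedIneq (s / n) f^[n] := by
  induction n, hn using Nat.le_induction with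
  | base => simpa using hf
  | succ k hk ih =>
    have hk' : (0 : ℝ) < k := by exact_mod_cast hk
    rw [Function.iterate_succ']
    convert hf.comp hs (div_pos hs hk') ih using 1
    push_cast
    field_simp

theorem sum_smul {ι : Type*} (hs : 0 < 1 + s) {t : Finset ι} {w : ι → ℝ}
    (hw₀ : ∀ i ∈ t, 0 ≤ w i) (hw₁ : ∑ i ∈ t, w i = 1) {f : ι → E → E}
    (hf : ∀ i ∈ t, AveragedIneq s (f i)) : AveragedIneq s (fun x => ∑ i ∈ t, w i • f i x) := by
  simp only [averagedIneq_iff_nonexpansive hs] at hf ⊢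
  intro x y
  have hexp : (1 + s) • (∑ i ∈ t, w i • f i x - ∑ i ∈ t, w i • f i y) - s • (x - y)
      = ∑ i ∈ t, w i • ((1 + s) • (f i x - f i y) - s • (x - y)) := by
    simp only [smul_sub, Finset.sum_sub_distrib, Finset.smul_sum, ← Finset.sum_smul, hw₁, one_smul,
      smul_comm (w _) (1 + s)]
  calc ‖(1 + s) • (∑ i ∈ t, w i • f i x - ∑ i ∈ t, w i • f i y) - s • (x - y)‖
      ≤ ∑ i ∈ t, ‖w i • ((1 + s) • (f i x - f i y) - s • (x - y))‖ := hexp ▸ norm_sum_le _ _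
    _ ≤ ∑ i ∈ t, w i * ‖x - y‖ := by
      refine Finset.sum_le_sum fun i hi => ?_
      rw [norm_smul, Real.norm_of_nonneg (hw₀ i hi)]
      exact mul_le_mul_of_nonneg_left (hf i hi x y) (hw₀ i hi)
    _ = ‖x - y‖ := by rw [← Finset.sum_mul, hw₁, one_mul]

end AveragedIneq

end InnerProduct

/-- The paper's `ζ`: the `H`-fold composition of `β`-averaged maps is
`iterAveragedConst H β`-averaged. -/
noncomputable def iterAveragedConst (H β : ℝ) : ℝ := H * β / (1 + (H - 1) * β)

theorem iterAveragedConst_mem_Ioo {H β : ℝ} (hH : 1 ≤ H) (hβ₀ : 0 < β) (hβ₁ : β < 1) :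
    iterAveragedConst H β ∈ Set.Ioo 0 1 := by
  have hD : 0 < 1 + (H - 1) * β := by nlinarith
  exact ⟨div_pos (by positivity) hD, (div_lt_one hD).2 (by nlinarith)⟩

theorem one_sub_div_iterAveragedConst {H β : ℝ} (hH : 1 ≤ H) (hβ : 0 < β) :
    (1 - iterAveragedConst H β) / iterAveragedConst H β = (1 - β) / β / H := by
  have hD : 0 < 1 + (H - 1) * β := by nlinarith
  rw [iterAveragedConst, one_sub_div hD.ne', div_div_div_cancel_right₀ hD.ne', div_div,
    mul_comm β]
  ring

theorem le_div_mul_one_sub_mul {ζ c a b : ℝ} (hζ : ζ ∈ Set.Ioo 0 1) (hc : 0 < c) (ha : 0 ≤ a)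
    (h : (1 - ζ) / ζ * c * a ≤ b) : a ≤ b / (ζ * (1 - ζ) * c) := by
  obtain ⟨hζ₀, hζ₁⟩ := hζ
  have hζ₁' : 0 < 1 - ζ := sub_pos.2 hζ₁
  have hloss : ζ * (1 - ζ) ≤ (1 - ζ) / ζ := by
    rw [le_div_iff₀ hζ₀]
    nlinarith [mul_pos (mul_pos hζ₁' hζ₁') (add_pos one_pos hζ₀)]
  rw [le_div_iff₀ (by positivity)]
  calc a * (ζ * (1 - ζ) * c) = ζ * (1 - ζ) * c * a := mul_comm _ _
    _ ≤ (1 - ζ) / ζ * c * a := by gcongr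
    _ ≤ b := h

theorem stmt_3_general (d M : ℕ) (hM : 0 < M)
    (T : Fin M → EuclideanSpace ℝ (Fin d) → EuclideanSpace ℝ (Fin d))
    (α : ℝ) (hα0 : 0 < α)
    (hT : ∀ i, ∃ T' : EuclideanSpace ℝ (Fin d) → EuclideanSpace ℝ (Fin d),
      (∀ x y, ‖T' x - T' y‖ ≤ ‖x - y‖) ∧ ∀ x, T i x = α • T' x + (1 - α) • x)
    (l : ℝ) (hl0 : 0 < l) (hl1 : l < 1 / α)
    (H : ℕ) (hH : 1 ≤ H)
    (S : EuclideanSpace ℝ (Fin d) → EuclideanSpace ℝ (Fin d))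
    (hS : ∀ x, S x = (M : ℝ)⁻¹ • ∑ i, (fun z => l • T i z + (1 - l) • z)^[H] x)
    (ζ : ℝ) (hζ : ζ = (H : ℝ) * α * l / (1 + ((H : ℝ) - 1) * α * l))
    (xd : EuclideanSpace ℝ (Fin d)) (hxd : S xd = xd)
    (y : ℕ → EuclideanSpace ℝ (Fin d)) (hy : ∀ n, y (n + 1) = S (y n)) :
    ∀ n : ℕ, ‖y (n + 1) - y n‖ ^ 2
      ≤ ‖y 0 - xd‖ ^ 2 / (ζ * (1 - ζ) * ((n : ℝ) + 1)) := by
  intro n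
  have hβ₀ : 0 < α * l := mul_pos hα0 hl0
  have hβ₁ : α * l < 1 := by rwa [lt_div_iff₀ hα0, mul_comm] at hl1
  have hH' : (1 : ℝ) ≤ H := by exact_mod_cast hH
  have hζ' : ζ = iterAveragedConst H (α * l) := by rw [hζ, iterAveragedConst]; ring
  have hrelax (i : Fin M) :
      AveragedIneq ((1 - α * l) / (α * l)) fun z => l • T i z + (1 - l) • z := by
    obtain ⟨T', hT', hTi⟩ := hT i
    exact averagedIneq_of_eq_smul_add hβ₀ hT' fun x => by rw [hTi]; module
  have hSavg : AveragedIneq ((1 - ζ) / ζ) S := by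
    obtain rfl : S = _ := funext hS
    rw [hζ', one_sub_div_iterAveragedConst hH' hβ₀]
    have hM' : (M : ℝ) ≠ 0 := by positivity
    simpa only [← Finset.smul_sum] using AveragedIneq.sum_smul (w := fun _ => (M : ℝ)⁻¹)
      (by positivity) (fun _ _ => by positivity) (by simp [hM'])
      fun i _ => (hrelax i).iterate (div_pos (sub_pos.2 hβ₁) hβ₀) hH
  have hζmem : ζ ∈ Set.Ioo 0 1 := hζ' ▸ iterAveragedConst_mem_Ioo hH' hβ₀ hβ₁
  exact le_div_mul_one_sub_mul hζmem (by positivity) (sq_nonneg _)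
    (hSavg.mul_sq_norm_succ_sub_le (div_nonneg (sub_pos.2 hζmem.2).le hζmem.1.le) hxd hy n)

/-- O(1/n) rate for squared successive differences of the
iterates of 𝒯̃_λ. -/
theorem stmt_3 (d M : ℕ) (hM : 0 < M)
    (T : Fin M → EuclideanSpace ℝ (Fin d) → EuclideanSpace ℝ (Fin d))
    (α : ℝ) (hα0 : 0 < α) (hα1 : α ≤ 1)
    (hT : ∀ i, ∃ T' : EuclideanSpace ℝ (Fin d) → EuclideanSpace ℝ (Fin d),
      (∀ x y, ‖T' x - T' y‖ ≤ ‖x - y‖) ∧ ∀ x, T i x = α • T' x + (1 - α) • x)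
    (l : ℝ) (hl0 : 0 < l) (hl1 : l < 1 / α)
    (H : ℕ) (hH : 1 ≤ H)
    (S : EuclideanSpace ℝ (Fin d) → EuclideanSpace ℝ (Fin d))
    (hS : ∀ x, S x = (M : ℝ)⁻¹ • ∑ i, (fun z => l • T i z + (1 - l) • z)^[H] x)
    (ζ : ℝ) (hζ : ζ = (H : ℝ) * α * l / (1 + ((H : ℝ) - 1) * α * l))
    (xd : EuclideanSpace ℝ (Fin d)) (hxd : S xd = xd)
    (y : ℕ → EuclideanSpace ℝ (Fin d)) (hy : ∀ n, y (n + 1) = S (y n)) :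
    ∀ n : ℕ, ‖y (n + 1) - y n‖ ^ 2
      ≤ ‖y 0 - xd‖ ^ 2 / (ζ * (1 - ζ) * ((n : ℝ) + 1)) :=
  stmt_3_general d M hM T α hα0 hT l hl0 hl1 H hH S hS ζ hζ xd hxd y hy
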